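/- arXiv:1604.00346 — 2 statements merged into one kernel-verified Lean document; each statement's English description precedes it below -/
import Mathlib

section
/- Increasing-monotonic refactoring theorem (correctness and no code duplication): for every base program B : α → Option β and every list L of conditional delta operations, there exist a base program B' and a list L' of conditional delta operations such that: (i) every operation of L' is an add (its payload is some d for some d); (ii) for every product p, variant B' L' p = variant B L p; (iii) L'.length ≤ L.length; (iv) for every reference k, B' k = B k or B' k = none; and (v) every operation (c', k, some d) of L' satisfies either (∃ c, (c, k, some d) ∈ L) or B k = some d. -/
open Classical in
/-- The variant generated for product `p` from base program `B` and list `L` of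
conditional delta operations. -/
noncomputable def variant {α β ρ : Type*} (B : α → Option β)
    (L : List ((ρ → Prop) × α × Option β)) (p : ρ) : α → Option β :=
  L.foldl (fun P op => if op.1 p then Function.update P op.2.1 op.2.2 else P) B

/-!
Replace the base `B` by `B'`, which drops every reference that some product ends up
without, and replace each operation `(c, k, o)` of `L` by the add of `d = o.or (B k)`
at `k`, guarded by "the original variant holds `d` at `k`". Since the guard reads off
the final value, all active adds at `k` write the same value as the original variant,
so their order is irrelevant. Turning a remove of `k` into an add of `B k` is what
restores `B k` for the products that kept it, once `k` has been dropped from the base.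
-/

section Variant

variable {α β ρ : Type*}

open Classical

theorem variant_cons (B : α → Option β) (op : (ρ → Prop) × α × Option β)
    (L : List ((ρ → Prop) × α × Option β)) (p : ρ) :
    variant B (op :: L) p =
      variant (if op.1 p then Function.update B op.2.1 op.2.2 else B) L p :=
  rfl

theorem variant_apply_eq_or_mem (B : α → Option β) (L : List ((ρ → Prop) × α × Option β))
    (p : ρ) (k : α) :
    variant B L p k = B k ∨ ∃ op ∈ L, op.1 p ∧ op.2.1 = k ∧ op.2.2 = variant B L p k := by
  induction L generalizing B with
  | nil => exact Or.inl rfl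
  | cons a L ih =>
    rw [variant_cons]
    rcases ih (if a.1 p then Function.update B a.2.1 a.2.2 else B) with h | ⟨op, hop, hact⟩
    · by_cases ha : a.1 p ∧ a.2.1 = k
      · refine Or.inr ⟨a, List.mem_cons_self, ha.1, ha.2, ?_⟩
        rw [h, if_pos ha.1, ← ha.2, Function.update_self]
      · left
        by_cases hp : a.1 p
        · rw [h, if_pos hp, Function.update_of_ne (Ne.symm (ha ⟨hp, ·⟩))]
        · rw [h, if_neg hp]
    · exact Or.inr ⟨op, List.mem_cons_of_mem _ hop, hact⟩

theorem variant_apply_eq_of_forall_active {B : α → Option β}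
    {L : List ((ρ → Prop) × α × Option β)} {p : ρ} {k : α} {v : Option β}
    (hpayload : ∀ op ∈ L, op.1 p → op.2.1 = k → op.2.2 = v)
    (hstart : B k = v ∨ ∃ op ∈ L, op.1 p ∧ op.2.1 = k) :
    variant B L p k = v := by
  induction L generalizing B with
  | nil =>
    rcases hstart with h | ⟨_, h, _⟩
    exacts [h, absurd h List.not_mem_nil]
  | cons a L ih =>
    rw [variant_cons]
    refine ih (fun op hop => hpayload op (List.mem_cons_of_mem _ hop)) ?_
    by_cases hL : ∃ op ∈ L, op.1 p ∧ op.2.1 = k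
    · exact Or.inr hL
    left
    by_cases ha : a.1 p ∧ a.2.1 = k
    · simp [ha.1, ← ha.2, hpayload a List.mem_cons_self ha.1 ha.2]
    · have hB : B k = v := by
        rcases hstart with h | ⟨op, hop, hact⟩
        · exact h
        · rcases List.mem_cons.mp hop with rfl | hop
          exacts [absurd hact ha, absurd ⟨op, hop, hact⟩ hL]
      by_cases hp : a.1 p
      · rw [if_pos hp, Function.update_of_ne (Ne.symm (ha ⟨hp, ·⟩)), hB]
      · rw [if_neg hp, hB]

end Variant

section Increasing

variable {α β ρ : Type*} (B : α → Option β) (L : List ((ρ → Prop) × α × Option β))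

open Classical

noncomputable def increasingBase : α → Option β :=
  fun k => if ∃ p, variant B L p k = none then none else B k

noncomputable def increasingDelta (op : (ρ → Prop) × α × Option β) :
    Option ((ρ → Prop) × α × Option β) :=
  (op.2.2.or (B op.2.1)).map fun d => (fun p => variant B L p op.2.1 = some d, op.2.1, some d)

noncomputable def increasingDeltas : List ((ρ → Prop) × α × Option β) :=
  L.filterMap (increasingDelta B L)

variable {B L}

theorem mem_increasingDeltas {op' : (ρ → Prop) × α × Option β} :
    op' ∈ increasingDeltas B L ↔ ∃ op ∈ L, ∃ d, op.2.2.or (B op.2.1) = some d ∧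
      (fun p => variant B L p op.2.1 = some d, op.2.1, some d) = op' := by
  simp only [increasingDeltas, increasingDelta, List.mem_filterMap, Option.map_eq_some_iff]

theorem exists_payload_of_mem_increasingDeltas {op' : (ρ → Prop) × α × Option β}
    (h : op' ∈ increasingDeltas B L) : ∃ d, op'.2.2 = some d := by
  obtain ⟨_, _, d, _, rfl⟩ := mem_increasingDeltas.mp h
  exact ⟨d, rfl⟩

variable (B L) in
theorem length_increasingDeltas_le : (increasingDeltas B L).length ≤ L.length :=
  List.length_filterMap_le _ _

variable (B L) in
theorem increasingBase_eq_or_eq_none (k : α) :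
    increasingBase B L k = B k ∨ increasingBase B L k = none := by
  unfold increasingBase
  split_ifs
  exacts [Or.inr rfl, Or.inl rfl]

theorem mem_or_base_of_mem_increasingDeltas {c' : ρ → Prop} {k : α} {d : β}
    (h : (c', k, some d) ∈ increasingDeltas B L) :
    (∃ c : ρ → Prop, (c, k, some d) ∈ L) ∨ B k = some d := by
  obtain ⟨⟨c, k, o⟩, hop, d, hd, heq⟩ := mem_increasingDeltas.mp h
  simp only [Prod.mk.injEq, Option.some.injEq] at heq
  obtain ⟨-, rfl, rfl⟩ := heq
  rcases Option.or_eq_some_iff.mp hd with rfl | ⟨-, hB⟩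
  exacts [Or.inl ⟨c, hop⟩, Or.inr hB]

theorem exists_active_mem_increasingDeltas {p : ρ} {k : α} {d : β}
    {op : (ρ → Prop) × α × Option β} (hop : op ∈ L) (hk : op.2.1 = k)
    (hd : op.2.2.or (B k) = some d) (hv : variant B L p k = some d) :
    ∃ op' ∈ increasingDeltas B L, op'.1 p ∧ op'.2.1 = k := by
  subst hk
  exact ⟨_, mem_increasingDeltas.mpr ⟨op, hop, d, hd, rfl⟩, hv, rfl⟩

theorem increasingBase_eq_or_exists_active (p : ρ) (k : α) :
    increasingBase B L k = variant B L p k ∨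
      ∃ op' ∈ increasingDeltas B L, op'.1 p ∧ op'.2.1 = k := by
  rcases hv : variant B L p k with _ | d
  · exact Or.inl (if_pos ⟨p, hv⟩)
  rcases variant_apply_eq_or_mem B L p k with hB | ⟨op, hop, -, hk, hpay⟩
  · by_cases hlost : ∃ q, variant B L q k = none
    · obtain ⟨q, hq⟩ := hlost
      rcases variant_apply_eq_or_mem B L q k with hB' | ⟨op, hop, -, hk, hpay⟩
      · rw [← hB', hq, hv] at hB
        exact absurd hB (Option.some_ne_none d)
      · refine Or.inr (exists_active_mem_increasingDeltas hop hk ?_ hv)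
        rw [hpay, hq, Option.none_or, ← hB, hv]
    · exact Or.inl (by rw [increasingBase, if_neg hlost, ← hB, hv])
  · refine Or.inr (exists_active_mem_increasingDeltas hop hk ?_ hv)
    rw [hpay, hv, Option.some_or]

theorem variant_increasingBase_increasingDeltas (p : ρ) :
    variant (increasingBase B L) (increasingDeltas B L) p = variant B L p := by
  funext k
  refine variant_apply_eq_of_forall_active ?_ (increasingBase_eq_or_exists_active p k)
  intro op' hop' hactive hk
  obtain ⟨op, -, d, -, rfl⟩ := mem_increasingDeltas.mp hop'
  subst hk
  exact hactive.symm

end Increasing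

/-- Increasing-monotonic refactoring theorem: every SPL is equivalent to a
strictly-increasing monotonic one, without code duplication. -/
theorem increasing_refactoring {α β ρ : Type*} (B : α → Option β)
    (L : List ((ρ → Prop) × α × Option β)) :
    ∃ (B' : α → Option β) (L' : List ((ρ → Prop) × α × Option β)),
      (∀ op ∈ L', ∃ d : β, op.2.2 = some d) ∧
      (∀ p : ρ, variant B' L' p = variant B L p) ∧
      L'.length ≤ L.length ∧
      (∀ k : α, B' k = B k ∨ B' k = none) ∧
      (∀ (c' : ρ → Prop) (k : α) (d : β), (c', k, some d) ∈ L' →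
        (∃ c : ρ → Prop, (c, k, some d) ∈ L) ∨ B k = some d) :=
  ⟨increasingBase B L, increasingDeltas B L,
    fun _ => exists_payload_of_mem_increasingDeltas,
    variant_increasingBase_increasingDeltas,
    length_increasingDeltas_le B L,
    increasingBase_eq_or_eq_none B L,
    fun _ _ _ => mem_or_base_of_mem_increasingDeltas⟩
end

section
/- Strictly-decreasing refactoring when every reference is introduced only once: suppose that (a) for every reference k with B k ≠ none, L contains no add on k, and (b) for every reference k, L contains at most one add on k (at most one element of the form (c, k, some d)). Then there exist a base program B' and a list L' such that every operation of L' is a remove (payload none), for every product p, variant B' L' p = variant B L p, and for every reference k, either B' k = B k, or B k = none and there exist c and d with (c, k, some d) ∈ L and B' k = some d. -/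
theorem List.eq_of_countP_le_one {γ : Type*} {P : γ → Bool} {L : List γ} (hL : L.countP P ≤ 1)
    {a b : γ} (ha : a ∈ L) (hb : b ∈ L) (hPa : P a) (hPb : P b) : a = b := by
  induction L with
  | nil => simp at ha
  | cons x t ih =>
    rw [List.countP_cons] at hL
    rcases List.mem_cons.mp ha with rfl | hat <;> rcases List.mem_cons.mp hb with rfl | hbt
    · rfl
    · have := List.countP_pos_iff.mpr ⟨b, hbt, hPb⟩
      rw [if_pos hPa] at hL
      omega
    · have := List.countP_pos_iff.mpr ⟨a, hat, hPa⟩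
      rw [if_pos hPb] at hL
      omega
    · exact ih (by omega) hat hbt

open Classical

section Variant
variable {α β ρ : Type*}

theorem variant_apply (B : α → Option β) (L : List ((ρ → Prop) × α × Option β)) (p : ρ) (k : α) :
    variant B L p k =
      ((L.filter fun op => op.1 p ∧ op.2.1 = k).getLast?.map (·.2.2)).getD (B k) := by
  induction L using List.reverseRecOn with
  | nil => rfl
  | append_singleton L op ih =>
    rw [variant, List.foldl_concat, ← variant]
    by_cases hp : op.1 p <;> by_cases hk : op.2.1 = k
    · subst hk; simp [hp]
    · simp [hp, hk, ih, Function.update_of_ne (Ne.symm hk)]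
    · simp [hp, ih]
    · simp [hp, ih]

variable {B : α → Option β} {L : List ((ρ → Prop) × α × Option β)} {p : ρ} {k : α}

theorem variant_apply_of_forall_not_active (h : ∀ op ∈ L, op.2.1 = k → ¬ op.1 p) :
    variant B L p k = B k := by
  rw [variant_apply, List.filter_eq_nil_iff.mpr (by simpa [and_comm] using h)]
  rfl

theorem variant_apply_eq_none_of_forall_remove (hL : ∀ op ∈ L, op.2.2 = none)
    (h : ∃ op ∈ L, op.2.1 = k ∧ op.1 p) : variant B L p k = none := by
  obtain ⟨op, hop, hk, hp⟩ := h
  have hne : (L.filter fun op => op.1 p ∧ op.2.1 = k) ≠ [] :=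
    List.ne_nil_of_mem (List.mem_filter.mpr ⟨hop, by simp [hp, hk]⟩)
  obtain ⟨last, hlast⟩ := Option.ne_none_iff_exists'.mp (mt List.getLast?_eq_none_iff.mp hne)
  rw [variant_apply, hlast, Option.map_some, Option.getD_some]
  exact hL last (List.mem_filter.mp (List.mem_of_getLast? hlast)).1

theorem exists_add_or_eq_of_variant_apply_eq_some {d : β} (h : variant B L p k = some d) :
    (∃ c, (c, k, some d) ∈ L) ∨ B k = some d := by
  rw [variant_apply] at h
  cases hlast : (L.filter fun op => op.1 p ∧ op.2.1 = k).getLast? with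
  | none => rw [hlast] at h; exact .inr h
  | some op =>
    rw [hlast, Option.map_some, Option.getD_some] at h
    obtain ⟨hop, hpk⟩ := List.mem_filter.mp (List.mem_of_getLast? hlast)
    have hk : op.2.1 = k := (of_decide_eq_true hpk).2
    exact .inl ⟨op.1, by rwa [← hk, ← h]⟩

end Variant

section Refactoring
variable {α β ρ : Type*}

noncomputable def refactoredBase (B : α → Option β) (L : List ((ρ → Prop) × α × Option β)) :
    α → Option β :=
  fun k => if h : ∃ d c, (c, k, some d) ∈ L then some h.choose else B k

def refactoredRemoves (B : α → Option β) (L : List ((ρ → Prop) × α × Option β)) :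
    List ((ρ → Prop) × α × Option β) :=
  L.map fun op => (fun q => variant B L q op.2.1 = none, op.2.1, none)

variable {B : α → Option β} {L : List ((ρ → Prop) × α × Option β)} {k : α}

theorem forall_mem_refactoredRemoves_eq_none :
    ∀ op ∈ refactoredRemoves B L, op.2.2 = none := by
  simp only [refactoredRemoves, List.forall_mem_map, implies_true]

theorem refactoredBase_of_not_exists_add (h : ¬ ∃ (c : ρ → Prop) (d : β), (c, k, some d) ∈ L) :
    refactoredBase B L k = B k :=
  dif_neg fun ⟨d, c, hc⟩ => h ⟨c, d, hc⟩

theorem eq_of_mem_add_of_mem_add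
    (hb : L.countP (fun op => decide (op.2.1 = k ∧ ∃ d : β, op.2.2 = some d)) ≤ 1)
    {c c' : ρ → Prop} {d d' : β} (h : (c, k, some d) ∈ L) (h' : (c', k, some d') ∈ L) :
    d = d' := by
  have := List.eq_of_countP_le_one hb h h' (by simp) (by simp)
  simp_all

theorem refactoredBase_eq_of_mem
    (hb : L.countP (fun op => decide (op.2.1 = k ∧ ∃ d : β, op.2.2 = some d)) ≤ 1)
    {c : ρ → Prop} {d : β} (h : (c, k, some d) ∈ L) : refactoredBase B L k = some d := by
  have hex : ∃ d c, (c, k, some d) ∈ L := ⟨d, c, h⟩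
  rw [refactoredBase, dif_pos hex, eq_of_mem_add_of_mem_add hb hex.choose_spec.choose_spec h]

theorem variant_refactoredBase_refactoredRemoves
    (ha : ∀ k : α, B k ≠ none → ∀ (c : ρ → Prop) (d : β), (c, k, some d) ∉ L)
    (hb : ∀ k : α,
      L.countP (fun op => decide (op.2.1 = k ∧ ∃ d : β, op.2.2 = some d)) ≤ 1) (p : ρ) :
    variant (refactoredBase B L) (refactoredRemoves B L) p = variant B L p := by
  funext k
  cases hV : variant B L p k with
  | none =>
    by_cases hused : ∃ op ∈ L, op.2.1 = k
    · obtain ⟨op, hop, rfl⟩ := hused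
      exact variant_apply_eq_none_of_forall_remove forall_mem_refactoredRemoves_eq_none
        ⟨_, List.mem_map_of_mem hop, rfl, hV⟩
    · push Not at hused
      have hinactive : ∀ op ∈ refactoredRemoves B L, op.2.1 = k → ¬ op.1 p := by
        rw [refactoredRemoves, List.forall_mem_map]
        exact fun op hop hk => (hused op hop hk).elim
      rw [variant_apply_of_forall_not_active hinactive,
        refactoredBase_of_not_exists_add fun ⟨_, _, h⟩ => hused _ h rfl, ← hV,
        variant_apply_of_forall_not_active fun op hop hk => (hused op hop hk).elim]
  | some d =>
    have hinactive : ∀ op ∈ refactoredRemoves B L, op.2.1 = k → ¬ op.1 p := by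
      rw [refactoredRemoves, List.forall_mem_map]
      rintro op - rfl hnone
      simp [hV] at hnone
    rw [variant_apply_of_forall_not_active hinactive]
    rcases exists_add_or_eq_of_variant_apply_eq_some hV with ⟨c, hc⟩ | hBk
    · exact refactoredBase_eq_of_mem (hb k) hc
    · rw [refactoredBase_of_not_exists_add fun ⟨c, d', h⟩ => ha k (by simp [hBk]) c d' h, hBk]

end Refactoring

open Classical in
/-- Strictly-decreasing refactoring when every reference is introduced only once. -/
theorem strictly_decreasing_refactoring {α β ρ : Type*} (B : α → Option β)
    (L : List ((ρ → Prop) × α × Option β))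
    (ha : ∀ k : α, B k ≠ none → ∀ (c : ρ → Prop) (d : β), (c, k, some d) ∉ L)
    (hb : ∀ k : α,
      L.countP (fun op => decide (op.2.1 = k ∧ ∃ d : β, op.2.2 = some d)) ≤ 1) :
    ∃ (B' : α → Option β) (L' : List ((ρ → Prop) × α × Option β)),
      (∀ op ∈ L', op.2.2 = none) ∧
      (∀ p : ρ, variant B' L' p = variant B L p) ∧
      (∀ k : α, B' k = B k ∨
        (B k = none ∧ ∃ (c : ρ → Prop) (d : β), (c, k, some d) ∈ L ∧ B' k = some d)) := by
  refine ⟨refactoredBase B L, refactoredRemoves B L, forall_mem_refactoredRemoves_eq_none,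
    variant_refactoredBase_refactoredRemoves ha hb, fun k => ?_⟩
  by_cases hadd : ∃ (c : ρ → Prop) (d : β), (c, k, some d) ∈ L
  · obtain ⟨c, d, hcd⟩ := hadd
    exact .inr ⟨not_not.mp fun hB => ha k hB c d hcd, c, d, hcd,
      refactoredBase_eq_of_mem (hb k) hcd⟩
  · exact .inl (refactoredBase_of_not_exists_add hadd)
end
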